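/- Let A ⊆ B(H) be a C*-algebra and (m_n)_{n∈ℕ} a sequence in B(H,K) such that Σ_n m_n m_n* = I_K (convergence in the strong operator topology, with Σ_n m_n m_n* ≤ I_K for all partial sums) and such that m_n* m_k commutes with every element of A for all n, k. Then the map ϑ(a) := Σ_n m_n a m_n* satisfies ϑ(a b) = ϑ(a) ϑ(b) for all a, b ∈ A; that is, ϑ is multiplicative. -/

import Mathlib

/-!
Push `θ b ξ = ∑ₖ mₖ b mₖ* ξ` through `mₙ a mₙ*`: since `mₙ* mₖ` commutes with `a`, each term
`mₙ a mₙ* mₖ b mₖ* ξ` equals `mₙ mₙ* mₖ (a b) mₖ* ξ`, so the `n`-th term of `θ a (θ b ξ)` is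
`mₙ mₙ* (θ (a b) ξ)`. Summing over `n` with `∑ₙ mₙ mₙ* = 1` gives `θ (a b) ξ`.
-/

open ContinuousLinearMap

section

variable {H K : Type*} [NormedAddCommGroup H] [InnerProductSpace ℂ H] [CompleteSpace H]
    [NormedAddCommGroup K] [InnerProductSpace ℂ K] [CompleteSpace K]
    {m : ℕ → (H →L[ℂ] K)} {θ : (H →L[ℂ] H) → (K →L[ℂ] K)}

theorem apply_adjoint_apply_comp_of_commute
    (hθ : ∀ (a : H →L[ℂ] H) (ξ : K), HasSum (fun n => m n (a (adjoint (m n) ξ))) (θ a ξ))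
    {a : H →L[ℂ] H} (ha : ∀ n k, Commute (adjoint (m n) ∘L m k) a)
    (b : H →L[ℂ] H) (ξ : K) (n : ℕ) :
    m n (a (adjoint (m n) (θ b ξ))) = m n (adjoint (m n) (θ (a ∘L b) ξ)) := by
  have hterm : ∀ k, (m n ∘L a ∘L adjoint (m n)) (m k (b (adjoint (m k) ξ))) =
      (m n ∘L adjoint (m n)) (m k ((a ∘L b) (adjoint (m k) ξ))) := fun k => by
    simpa only [mul_def, comp_apply] using
      congrArg (fun T : H →L[ℂ] H => m n (T (b (adjoint (m k) ξ)))) (ha n k).eq.symm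
  have hleft := (hθ b ξ).mapL (m n ∘L a ∘L adjoint (m n))
  simp only [hterm] at hleft
  exact hleft.unique ((hθ (a ∘L b) ξ).mapL (m n ∘L adjoint (m n)))

theorem map_comp_of_commute
    (hsum : ∀ ξ : K, HasSum (fun n => m n (adjoint (m n) ξ)) ξ)
    (hθ : ∀ (a : H →L[ℂ] H) (ξ : K), HasSum (fun n => m n (a (adjoint (m n) ξ))) (θ a ξ))
    {a : H →L[ℂ] H} (ha : ∀ n k, Commute (adjoint (m n) ∘L m k) a) (b : H →L[ℂ] H) :
    θ (a ∘L b) = θ a ∘L θ b := by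
  ext ξ
  have h := hsum (θ (a ∘L b) ξ)
  simp only [← apply_adjoint_apply_comp_of_commute hθ ha b ξ] at h
  exact h.unique (hθ a (θ b ξ))

end

theorem stmt_8 {H K : Type*} [NormedAddCommGroup H] [InnerProductSpace ℂ H] [CompleteSpace H]
    [NormedAddCommGroup K] [InnerProductSpace ℂ K] [CompleteSpace K]
    (A : NonUnitalStarSubalgebra ℂ (H →L[ℂ] H))
    (m : ℕ → (H →L[ℂ] K))
    (hsum : ∀ ξ : K, HasSum (fun n => m n ((adjoint (m n)) ξ)) ξ)
    (hcomm : ∀ n k : ℕ, ∀ a ∈ A,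
      (adjoint (m n) ∘L m k) ∘L a = a ∘L (adjoint (m n) ∘L m k))
    (θ : (H →L[ℂ] H) → (K →L[ℂ] K))
    (hθ : ∀ (a : H →L[ℂ] H) (ξ : K),
      HasSum (fun n => m n (a ((adjoint (m n)) ξ))) (θ a ξ)) :
    ∀ a ∈ A, ∀ b ∈ A, θ (a ∘L b) = θ a ∘L θ b :=
  fun a ha b _ => map_comp_of_commute hsum hθ (fun n k => hcomm n k a ha) b
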